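/- Let G be a simple ASHG on n players. Form G' by adding n(k−1) new players, each of whom values every original player at 1 (and all other values involving new players being 0, with original players valuing new players at 0). Then G has a k-coalition partition with egalitarian value at least δ if and only if G' has a k-coalition partition into equally sized coalitions (each of size n) with egalitarian value at least δ, provided δ ≥ 1. -/

import Mathlib

/-!
From a `k`-partition of `G` with egalitarian value `δ ≥ 1`, every coalition contains a player of
utility at least `δ`, hence (values being `0/1`) has more than `δ` members. Topping each coalition
up to size `n` with new players uses exactly `kn - n = n(k-1)` of them, and every new player then
values the more than `δ` original members of her coalition. Conversely, restricting a balanced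
partition of `G'` to the original players leaves their utilities unchanged, and no coalition
is lost: a new player of positive utility shares her coalition with an original player.
-/

open Finset Function

variable {α β ι : Type*}

section Utility

variable [Fintype α] [DecidableEq α] [DecidableEq ι]

def utility (w : α → α → ℕ) (P : α → ι) (a : α) : ℕ :=
  ∑ b ∈ univ.filter (fun b => P b = P a ∧ b ≠ a), w a b

theorem utility_le_card_fiber_sub_one (w : α → α → ℕ) (P : α → ι) (a : α)
    (hw : ∀ b, w a b ≤ 1) : utility w P a ≤ #{b | P b = P a} - 1 := by
  have hfilter :
      univ.filter (fun b => P b = P a ∧ b ≠ a) = (univ.filter (P · = P a)).erase a := by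
    rw [← filter_filter, filter_ne']
  calc utility w P a ≤ #(univ.filter (fun b => P b = P a ∧ b ≠ a)) * 1 :=
        sum_le_card_nsmul _ _ 1 fun b _ => hw b
    _ = #{b | P b = P a} - 1 := by
        rw [mul_one, hfilter, card_erase_of_mem (by simp)]

end Utility

/-- The values of `G'`: the players `Sum.inr _` are the new ones. -/
def paddedValue (v : α → α → ℕ) : α ⊕ β → α ⊕ β → ℕ :=
  Sum.elim (fun i => Sum.elim (v i) 0) fun _ => Sum.elim 1 0

section Padded

variable [Fintype α] [Fintype β] [DecidableEq α] [DecidableEq β] [DecidableEq ι]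

theorem utility_paddedValue_inl (v : α → α → ℕ) (Q : α ⊕ β → ι) (i : α) :
    utility (paddedValue v) Q (.inl i) = utility v (Q ∘ Sum.inl) i := by
  simp only [utility, sum_filter, Fintype.sum_sum_type, paddedValue, Sum.elim_inl, Sum.elim_inr,
    Pi.zero_apply, comp_apply, ne_eq, Sum.inl.injEq, reduceCtorEq, not_false_eq_true, and_true,
    ite_self, sum_const_zero, add_zero]

theorem utility_paddedValue_inr (v : α → α → ℕ) (Q : α ⊕ β → ι) (b : β) :
    utility (paddedValue v) Q (.inr b) = #{i | Q (.inl i) = Q (.inr b)} := by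
  simp only [utility, sum_filter, Fintype.sum_sum_type, paddedValue, Sum.elim_inl, Sum.elim_inr,
    Pi.zero_apply, Pi.one_apply, ne_eq, reduceCtorEq, not_false_eq_true, and_true, ite_self,
    sum_const_zero, add_zero, card_filter]

theorem surjective_comp_inl_of_utility_pos (v : α → α → ℕ) (Q : α ⊕ β → ι)
    (hQ : ∀ c, (univ.filter (Q · = c)).Nonempty)
    (hpos : ∀ b, 0 < utility (paddedValue v) Q (.inr b)) : Surjective (Q ∘ Sum.inl) := by
  intro c
  obtain ⟨x | b, hx⟩ := hQ c
  · exact ⟨x, (mem_filter.1 hx).2⟩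
  · have hb := hpos b
    rw [utility_paddedValue_inr, card_pos] at hb
    obtain ⟨i, hi⟩ := hb
    exact ⟨i, (mem_filter.1 hi).2.trans (mem_filter.1 hx).2⟩

end Padded

theorem card_fiber_sumElim [Fintype α] [Fintype β] [DecidableEq ι] (P : α → ι) (g : β → ι)
    (c : ι) : #{x | Sum.elim P g x = c} = #{a | P a = c} + #{b | g b = c} := by
  simp only [card_filter, Fintype.sum_sum_type, Sum.elim_inl, Sum.elim_inr]
  rfl

theorem sum_card_sub_card_fiber [Fintype α] [Fintype ι] [DecidableEq ι] (P : α → ι) :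
    ∑ c, (Fintype.card α - #{a | P a = c}) = Fintype.card α * (Fintype.card ι - 1) := by
  rw [sum_tsub_distrib _ fun c _ => card_le_univ _, sum_const, card_univ,
    smul_eq_mul, ← card_eq_sum_card_fiberwise fun a _ => mem_univ (P a), card_univ,
    Nat.mul_sub_one, mul_comm]

theorem exists_card_fiber_eq [Fintype ι] [DecidableEq ι] (f : ι → ℕ) {N : ℕ}
    (hN : ∑ c, f c = N) : ∃ g : Fin N → ι, ∀ c, #{x | g x = c} = f c := by
  obtain ⟨e⟩ := Fintype.card_eq.1 (show Fintype.card (Σ c, Fin (f c)) = Fintype.card (Fin N) by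
    simp [hN])
  refine ⟨fun x => (e.symm x).1, fun c => ?_⟩
  rw [← Fintype.card_subtype, ← Fintype.card_fin (f c)]
  exact Fintype.card_congr ((e.symm.subtypeEquiv fun _ => Iff.rfl).trans (Equiv.sigmaSubtype c))

theorem exists_balanced_partition {n k δ : ℕ} (v : Fin n → Fin n → ℕ) (hv : ∀ i j, v i j ≤ 1)
    (P : Fin n → Fin k) (hP : Surjective P) (hδ : ∀ i, δ ≤ utility v P i) :
    ∃ Q : Fin n ⊕ Fin (n * (k - 1)) → Fin k,
      (∀ c, #{x | Q x = c} = n) ∧ ∀ x, δ ≤ utility (paddedValue v) Q x := by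
  have hfiber : ∀ c, δ < #{i | P i = c} := by
    intro c
    obtain ⟨i, rfl⟩ := hP c
    have hle := utility_le_card_fiber_sub_one v P i (hv i)
    have hpos : 0 < #{j | P j = P i} := card_pos.2 ⟨i, by simp⟩
    have := hδ i
    omega
  have hle : ∀ c, #{i | P i = c} ≤ n := fun c => (card_le_univ _).trans (by simp)
  obtain ⟨g, hg⟩ := exists_card_fiber_eq (fun c => n - #{i | P i = c})
    (by simpa using sum_card_sub_card_fiber P)
  refine ⟨Sum.elim P g, fun c => ?_, ?_⟩
  · rw [card_fiber_sumElim, hg]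
    have := hle c
    omega
  · rintro (i | b)
    · rw [utility_paddedValue_inl]
      exact hδ i
    · rw [utility_paddedValue_inr]
      exact (hfiber (g b)).le

theorem stmt_5 (n k δ : ℕ) (hn : 0 < n) (hδ : 1 ≤ δ)
    (v : Fin n → Fin n → ℕ) (hv : ∀ i j : Fin n, v i j = 0 ∨ v i j = 1) :
    (∃ P : Fin n → Fin k, Function.Surjective P ∧
      ∀ i : Fin n,
        δ ≤ ∑ j ∈ Finset.univ.filter (fun j => P j = P i ∧ j ≠ i), v i j)
    ↔
    (∃ Q : (Fin n ⊕ Fin (n * (k - 1))) → Fin k,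
      (∀ c : Fin k, (Finset.univ.filter (fun x => Q x = c)).card = n) ∧
      ∀ x : Fin n ⊕ Fin (n * (k - 1)),
        δ ≤ ∑ y ∈ Finset.univ.filter (fun y => Q y = Q x ∧ y ≠ x),
          (fun a b =>
            match a, b with
            | Sum.inl i, Sum.inl j => v i j
            | Sum.inr _, Sum.inl _ => 1
            | _, _ => 0) x y) := by
  have hw : (fun a b => match a, b with
      | Sum.inl i, Sum.inl j => v i j
      | Sum.inr _, Sum.inl _ => 1
      | _, _ => 0) = (paddedValue v : Fin n ⊕ Fin (n * (k - 1)) → _ → ℕ) := by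
    funext a b
    rcases a with a | a <;> rcases b with b | b <;> rfl
  rw [hw]
  constructor
  · rintro ⟨P, hP, hδP⟩
    exact exists_balanced_partition v (fun i j => (hv i j).elim (·.le.trans zero_le_one) (·.le))
      P hP hδP
  · rintro ⟨Q, hQcard, hδQ⟩
    refine ⟨Q ∘ Sum.inl, surjective_comp_inl_of_utility_pos v Q ?_ ?_, fun i => ?_⟩
    · exact fun c => card_pos.1 (by rw [hQcard c]; exact hn)
    · exact fun b => hδ.trans (hδQ (.inr b))
    · exact (hδQ (.inl i)).trans (utility_paddedValue_inl v Q i).le
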